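/- Optimality of the SIM for pure GU state sets: Let |φ⟩ be a unit vector in ℂ^n, G = {U_1,…,U_m} a finite group of n×n unitary matrices, and consider the pure GU state set ρ_i = |φ_i⟩⟨φ_i| with |φ_i⟩ = U_i|φ⟩ and equal priors 1/m; assume Δ = (1/m)Σ_i |φ_i⟩⟨φ_i| is invertible and let λ_min be its smallest eigenvalue. Then for every β with 1 − nλ_min ≤ β < 1, the SIM with γ = √((1−β)/n) is a measurement with P_I = β and maximizes P_D among all measurements with P_I = β. -/

import Mathlib

/-!
The group permutes the states, so `U_i Δ U_iᴴ = Δ`; hence every `U_i` commutes with `Δ⁻¹` and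
`⟨φ_i|Δ⁻¹|φ_i⟩` does not depend on `i`. Averaging over `i` gives `Tr(Δ⁻¹Δ) = n` for its value.
Consequently `Σ_i S_i = γ²Δ⁻¹`, so `S_0 = 1 - γ²Δ⁻¹` is positive because `γ² = (1-β)/n ≤ λ_min`,
`Tr(Δ S_0) = 1 - nγ² = β`, and the SIM attains `Σ_i ⟨φ_i|S_i|φ_i⟩ = n(1-β)`.
For an arbitrary measurement, Cauchy–Schwarz for the inner product `⟨u, v⟩ = u* Δ v` gives
`n Δ ⪰ |φ_i⟩⟨φ_i|`, hence `⟨φ_i|Π_i|φ_i⟩ ≤ n Tr(Π_i Δ)`; summing over `i` bounds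
`Σ_i ⟨φ_i|Π_i|φ_i⟩` by `n Tr((1 - Π_0)Δ) = n(1-β)`.
-/

open Matrix BigOperators ComplexOrder

namespace Matrix

variable {ι κ 𝕜 : Type*} [Fintype ι] [Fintype κ] [RCLike 𝕜]

lemma mul_vecMulVec_star_mul_conjTranspose (B : Matrix ι ι 𝕜) (x : ι → 𝕜) :
    B * vecMulVec x (star x) * Bᴴ = vecMulVec (B *ᵥ x) (star (B *ᵥ x)) := by
  rw [mul_vecMulVec, vecMulVec_mul, star_mulVec]

lemma trace_mul_vecMulVec_star (B : Matrix ι ι 𝕜) (x : ι → 𝕜) :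
    (B * vecMulVec x (star x)).trace = star x ⬝ᵥ (B *ᵥ x) := by
  rw [mul_vecMulVec, trace_vecMulVec, dotProduct_comm]

lemma star_dotProduct_vecMulVec_star_mulVec (x y : ι → 𝕜) :
    star x ⬝ᵥ (vecMulVec y (star y) *ᵥ x) = (‖star y ⬝ᵥ x‖ ^ 2 : ℝ) := by
  rw [vecMulVec_mulVec, dotProduct_smul, op_smul_eq_mul, star_dotProduct x, RCLike.star_def,
    RCLike.conj_mul, RCLike.ofReal_pow]

lemma PosSemidef.norm_dotProduct_mulVec_sq_le {A : Matrix ι ι 𝕜} (hA : A.PosSemidef)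
    (u v : ι → 𝕜) :
    ‖star u ⬝ᵥ (A *ᵥ v)‖ ^ 2 ≤
      RCLike.re (star u ⬝ᵥ (A *ᵥ u)) * RCLike.re (star v ⬝ᵥ (A *ᵥ v)) := by
  let := A.toSeminormedAddCommGroup hA
  let := A.toInnerProductSpace hA
  have hinner (a b : ι → 𝕜) : inner 𝕜 a b = star a ⬝ᵥ (A *ᵥ b) := dotProduct_comm _ _
  have h := inner_mul_inner_self_le (𝕜 := 𝕜) u v
  rw [norm_inner_symm v u] at h
  simpa only [sq, hinner] using h

variable [DecidableEq ι]

open scoped MatrixOrder in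
lemma PosSemidef.trace_mul_nonneg {A B : Matrix ι ι 𝕜} (hA : A.PosSemidef) (hB : B.PosSemidef) :
    0 ≤ (A * B).trace := by
  obtain ⟨C, rfl⟩ := CStarAlgebra.nonneg_iff_eq_star_mul_self.mp hB.nonneg
  rw [star_eq_conjTranspose, ← mul_assoc, trace_mul_cycle]
  exact (hA.mul_mul_conjTranspose_same C).trace_nonneg

lemma PosDef.posSemidef_smul_sub_vecMulVec {A : Matrix ι ι 𝕜} (hA : A.PosDef) (x : ι → 𝕜) :
    (RCLike.re (star x ⬝ᵥ (A⁻¹ *ᵥ x)) • A - vecMulVec x (star x)).PosSemidef := by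
  have hAinv : A⁻¹ * A = 1 := nonsing_inv_mul A ((isUnit_iff_isUnit_det A).mp hA.isUnit)
  refine .of_dotProduct_mulVec_nonneg
    ((hA.1.smul (IsSelfAdjoint.all _)).sub (posSemidef_vecMulVec_self_star x).1) fun v => ?_
  -- Cauchy–Schwarz for `⟪u, w⟫ = u* A w` at `u = A⁻¹ x`: `‖x* v‖² ≤ (x* A⁻¹ x) (v* A v)`
  have hcs := hA.posSemidef.norm_dotProduct_mulVec_sq_le (A⁻¹ *ᵥ x) v
  rw [star_mulVec, hA.1.inv.eq, ← dotProduct_mulVec, mulVec_mulVec, hAinv, one_mulVec,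
    ← dotProduct_mulVec, mulVec_mulVec, hAinv, one_mulVec] at hcs
  have hvAv := RCLike.nonneg_iff.mp (hA.posSemidef.dotProduct_mulVec_nonneg v)
  rw [sub_mulVec, smul_mulVec, vecMulVec_mulVec, dotProduct_sub, dotProduct_smul,
    dotProduct_smul, star_dotProduct v x, op_smul_eq_mul, RCLike.star_def, RCLike.conj_mul,
    RCLike.nonneg_iff]
  simp only [RCLike.smul_re, RCLike.smul_im, map_sub, hvAv.2]
  norm_cast
  simp only [mul_zero, sub_zero, and_true]
  linarith

lemma PosDef.re_star_dotProduct_mulVec_le {A N : Matrix ι ι 𝕜} (hA : A.PosDef)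
    (hN : N.PosSemidef) (x : ι → 𝕜) :
    RCLike.re (star x ⬝ᵥ (N *ᵥ x)) ≤
      RCLike.re (star x ⬝ᵥ (A⁻¹ *ᵥ x)) * RCLike.re (N * A).trace := by
  have h := RCLike.nonneg_iff.mp (hN.trace_mul_nonneg (hA.posSemidef_smul_sub_vecMulVec x)) |>.1
  rw [mul_sub, trace_sub, Matrix.mul_smul, trace_smul, trace_mul_vecMulVec_star, map_sub,
    RCLike.smul_re] at h
  linarith

open scoped MatrixOrder in
lemma PosDef.posSemidef_one_sub_smul_inv {A : Matrix ι ι 𝕜} (hA : A.PosDef) {c : ℝ}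
    (hc : ∀ i, c ≤ hA.1.eigenvalues i) : (1 - c • A⁻¹).PosSemidef := by
  have hcont (f : ℝ → ℝ) : ContinuousOn f (spectrum ℝ A) :=
    A.finite_real_spectrum.continuousOn f
  have hinv : A⁻¹ = cfc (fun x : ℝ => x⁻¹) A := by
    rw [← hA.isUnit.unit_spec, cfc_inv_id _ hA.1.isSelfAdjoint, coe_units_inv]
  have hcfc : 1 - c • A⁻¹ = cfc (fun x : ℝ => 1 - c * x⁻¹) A := by
    rw [cfc_sub _ _ A (hcont _) (hcont _), cfc_const_one ℝ A, cfc_const_mul _ _ A (hcont _),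
      ← hinv]
  rw [hcfc, ← nonneg_iff_posSemidef]
  refine cfc_nonneg fun x hx => ?_
  obtain ⟨i, rfl⟩ := hA.1.spectrum_real_eq_range_eigenvalues ▸ hx
  rw [sub_nonneg, ← div_eq_mul_inv, div_le_one (hA.eigenvalues_pos i)]
  exact hc i

section Orbit

variable {U : κ → Matrix ι ι 𝕜}

lemma star_mulVec_dotProduct_mulVec_of_unitary {V : Matrix ι ι 𝕜} (hV : Vᴴ * V = 1)
    (x y : ι → 𝕜) : star (V *ᵥ x) ⬝ᵥ (V *ᵥ y) = star x ⬝ᵥ y := by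
  rw [star_mulVec, ← dotProduct_mulVec, mulVec_mulVec, hV, one_mulVec]

lemma sum_comp_mul_of_group (hUunit : ∀ k, U k * (U k)ᴴ = 1) (hUinj : Function.Injective U)
    (hUmul : ∀ k j, ∃ l, U k * U j = U l) {M : Type*} [AddCommMonoid M]
    (f : Matrix ι ι 𝕜 → M) (k : κ) : ∑ j, f (U k * U j) = ∑ j, f (U j) := by
  choose l hl using hUmul k
  have hl_inj : Function.Injective l := fun a b hab => hUinj <| by
    have h := congrArg ((U k)ᴴ * ·) (congrArg U hab)
    simpa only [← hl, ← mul_assoc, mul_eq_one_comm.mp (hUunit k), one_mul] using h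
  simp_rw [hl]
  exact (Finite.injective_iff_bijective.mp hl_inj).sum_comp (f ∘ U)

lemma commute_sum_vecMulVec_orbit (hUunit : ∀ k, U k * (U k)ᴴ = 1)
    (hUinj : Function.Injective U) (hUmul : ∀ k j, ∃ l, U k * U j = U l) (φ : ι → 𝕜) (k : κ) :
    Commute (U k) (∑ j, vecMulVec (U j *ᵥ φ) (star (U j *ᵥ φ))) := by
  set F := ∑ j, vecMulVec (U j *ᵥ φ) (star (U j *ᵥ φ))
  have hF : U k * F * (U k)ᴴ = F := by
    simp only [F, Finset.mul_sum, Finset.sum_mul, mul_vecMulVec_star_mul_conjTranspose,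
      mulVec_mulVec]
    exact sum_comp_mul_of_group hUunit hUinj hUmul
      (fun V => vecMulVec (V *ᵥ φ) (star (V *ᵥ φ))) k
  calc U k * F = U k * F * ((U k)ᴴ * U k) := by rw [mul_eq_one_comm.mp (hUunit k), mul_one]
    _ = F * U k := by rw [← mul_assoc, hF]

variable {φ : ι → 𝕜} {Δ : Matrix ι ι 𝕜}

lemma trace_eq_one_of_orbit [Nonempty κ] (hUunit : ∀ k, U k * (U k)ᴴ = 1)
    (hφ : star φ ⬝ᵥ φ = 1)
    (hΔ : ∑ j, vecMulVec (U j *ᵥ φ) (star (U j *ᵥ φ)) = (Fintype.card κ : 𝕜) • Δ) :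
    Δ.trace = 1 := by
  have h := congrArg trace hΔ
  simp only [trace_smul, trace_sum, trace_vecMulVec, dotProduct_comm (U _ *ᵥ φ),
    star_mulVec_dotProduct_mulVec_of_unitary (mul_eq_one_comm.mp (hUunit _)), hφ,
    Finset.sum_const, Finset.card_univ, nsmul_eq_mul, mul_one, smul_eq_mul] at h
  exact (mul_eq_left₀ (Nat.cast_ne_zero.mpr Fintype.card_ne_zero)).mp h.symm

lemma star_dotProduct_inv_mulVec_orbit (hUunit : ∀ k, U k * (U k)ᴴ = 1)
    (hUinj : Function.Injective U) (hUmul : ∀ k j, ∃ l, U k * U j = U l)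
    (hΔ : ∑ j, vecMulVec (U j *ᵥ φ) (star (U j *ᵥ φ)) = (Fintype.card κ : 𝕜) • Δ)
    (hΔu : IsUnit Δ) (k : κ) :
    star (U k *ᵥ φ) ⬝ᵥ (Δ⁻¹ *ᵥ (U k *ᵥ φ)) = Fintype.card ι := by
  have : Nonempty κ := ⟨k⟩
  have hκ : (Fintype.card κ : 𝕜) ≠ 0 := Nat.cast_ne_zero.mpr Fintype.card_ne_zero
  have hΔ' : Δ = (Fintype.card κ : 𝕜)⁻¹ • ∑ j, vecMulVec (U j *ᵥ φ) (star (U j *ᵥ φ)) := by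
    rw [hΔ, smul_smul, inv_mul_cancel₀ hκ, one_smul]
  have hcomm (j : κ) : Commute (U j) Δ⁻¹ := by
    have h := (commute_sum_vecMulVec_orbit hUunit hUinj hUmul φ j).smul_right
      (Fintype.card κ : 𝕜)⁻¹
    rw [← hΔ', ← hΔu.unit_spec] at h
    simpa only [coe_units_inv, IsUnit.unit_spec] using h.units_inv_right
  have hconst (j : κ) :
      star (U j *ᵥ φ) ⬝ᵥ (Δ⁻¹ *ᵥ (U j *ᵥ φ)) = star φ ⬝ᵥ (Δ⁻¹ *ᵥ φ) := by
    rw [mulVec_mulVec, ← (hcomm j).eq, ← mulVec_mulVec,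
      star_mulVec_dotProduct_mulVec_of_unitary (mul_eq_one_comm.mp (hUunit j))]
  have htrace : ∑ j, star (U j *ᵥ φ) ⬝ᵥ (Δ⁻¹ *ᵥ (U j *ᵥ φ)) =
      Fintype.card κ * Fintype.card ι := by
    simp only [← trace_mul_vecMulVec_star, ← trace_sum, ← Finset.mul_sum, hΔ, Matrix.mul_smul,
      nonsing_inv_mul _ ((isUnit_iff_isUnit_det Δ).mp hΔu), trace_smul, trace_one, smul_eq_mul]
  simp only [hconst, Finset.sum_const, Finset.card_univ, nsmul_eq_mul] at htrace
  rw [hconst]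
  exact mul_left_cancel₀ hκ htrace

end Orbit

section SIM

variable {Δ : Matrix ι ι 𝕜}

lemma trace_mul_one_sub_smul_inv (hΔu : IsUnit Δ) (c : ℝ) :
    (Δ * (1 - c • Δ⁻¹)).trace = Δ.trace - c • (Fintype.card ι : 𝕜) := by
  rw [mul_sub, mul_one, Matrix.mul_smul, mul_nonsing_inv _ ((isUnit_iff_isUnit_det Δ).mp hΔu),
    trace_sub, trace_smul, trace_one]

lemma sum_vecMulVec_smul_inv_mulVec {v : κ → ι → 𝕜} (hΔH : Δ.IsHermitian) (hΔu : IsUnit Δ)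
    (hΔ : ∑ j, vecMulVec (v j) (star (v j)) = (Fintype.card κ : 𝕜) • Δ) (a : 𝕜) :
    ∑ j, vecMulVec (a • (Δ⁻¹ *ᵥ v j)) (star (a • (Δ⁻¹ *ᵥ v j))) =
      (‖a‖ ^ 2 * Fintype.card κ) • Δ⁻¹ := by
  simp_rw [← smul_mulVec, ← mul_vecMulVec_star_mul_conjTranspose]
  rw [← Finset.sum_mul, ← Finset.mul_sum, hΔ, conjTranspose_smul, hΔH.inv.eq]
  simp only [Matrix.smul_mul, Matrix.mul_smul, smul_smul,
    nonsing_inv_mul _ ((isUnit_iff_isUnit_det Δ).mp hΔu), one_mul,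
    RCLike.real_smul_eq_coe_smul (K := 𝕜)]
  congr 1
  rw [mul_left_comm, RCLike.star_def, RCLike.conj_mul]
  push_cast
  ring

lemma re_star_dotProduct_vecMulVec_smul_inv_mulVec (hΔH : Δ.IsHermitian) (a : 𝕜) (x : ι → 𝕜) :
    RCLike.re (star x ⬝ᵥ (vecMulVec (a • (Δ⁻¹ *ᵥ x)) (star (a • (Δ⁻¹ *ᵥ x))) *ᵥ x)) =
      ‖a‖ ^ 2 * ‖star x ⬝ᵥ (Δ⁻¹ *ᵥ x)‖ ^ 2 := by
  rw [star_dotProduct_vecMulVec_star_mulVec, RCLike.ofReal_re, star_smul, smul_dotProduct,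
    star_mulVec, hΔH.inv.eq, ← dotProduct_mulVec, norm_smul, norm_star, mul_pow]

lemma sum_re_star_dotProduct_mulVec_le {v : κ → ι → 𝕜} {t : ℝ} (hΔ : Δ.PosDef)
    (htr : Δ.trace = 1) (hv : ∀ j, RCLike.re (star (v j) ⬝ᵥ (Δ⁻¹ *ᵥ v j)) = t)
    {N₀ : Matrix ι ι 𝕜} {N : κ → Matrix ι ι 𝕜} (hN : ∀ j, (N j).PosSemidef)
    (hsum : N₀ + ∑ j, N j = 1) :
    ∑ j, RCLike.re (star (v j) ⬝ᵥ (N j *ᵥ v j)) ≤ t * (1 - RCLike.re (Δ * N₀).trace) := calc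
  _ ≤ ∑ j, t * RCLike.re (N j * Δ).trace :=
    Finset.sum_le_sum fun j _ => hv j ▸ hΔ.re_star_dotProduct_mulVec_le (hN j) (v j)
  _ = t * (1 - RCLike.re (Δ * N₀).trace) := by
    rw [← Finset.mul_sum, ← map_sum, ← trace_sum, ← Finset.sum_mul, eq_sub_of_add_eq' hsum,
      sub_mul, one_mul, trace_sub, htr, trace_mul_comm N₀, map_sub, RCLike.one_re]

end SIM

end Matrix

theorem stmt_13_general {n m : ℕ} (hm : 0 < m)
    (U : Fin m → Matrix (Fin n) (Fin n) ℂ)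
    (hUunit : ∀ i, U i * (U i)ᴴ = 1)
    (hUinj : Function.Injective U)
    (hUmul : ∀ i j, ∃ k, U i * U j = U k)
    (φ : Fin n → ℂ) (hφunit : star φ ⬝ᵥ φ = 1)
    (φv : Fin m → (Fin n → ℂ)) (hφv : ∀ i, φv i = U i *ᵥ φ)
    (Δ : Matrix (Fin n) (Fin n) ℂ)
    (hΔ : Δ = (1 / (m : ℂ)) • ∑ i, Matrix.vecMulVec (φv i) (star (φv i)))
    (hΔH : Δ.IsHermitian)
    (lam : ℝ) (hlam : IsLeast (Set.range hΔH.eigenvalues) lam)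
    (β : ℝ) (hβ1 : 1 - (n : ℝ) * lam ≤ β) (hβ2 : β < 1)
    (γ : ℝ) (hγ : γ = Real.sqrt ((1 - β) / n))
    (ψ : Fin m → (Fin n → ℂ))
    (hψ : ∀ i, ψ i = (Real.sqrt (1 / m) : ℂ) • φv i)
    (μ : Fin m → (Fin n → ℂ))
    (hμ : ∀ i, μ i = (γ : ℂ) • (Δ⁻¹ *ᵥ ψ i))
    (S : Fin m → Matrix (Fin n) (Fin n) ℂ)
    (hS : ∀ i, S i = Matrix.vecMulVec (μ i) (star (μ i)))
    (S0 : Matrix (Fin n) (Fin n) ℂ) (hS0 : S0 = 1 - ∑ i, S i) :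
    S0.PosSemidef ∧ (Δ * S0).trace = (β : ℂ) ∧
    ∀ (N0 : Matrix (Fin n) (Fin n) ℂ) (N : Fin m → Matrix (Fin n) (Fin n) ℂ),
      N0.PosSemidef → (∀ i, (N i).PosSemidef) → (N0 + ∑ i, N i = 1) →
      (Δ * N0).trace = (β : ℂ) →
      (1 / m : ℝ) * ∑ i, (star (φv i) ⬝ᵥ (N i *ᵥ φv i)).re
        ≤ (1 / m : ℝ) * ∑ i, (star (φv i) ⬝ᵥ (S i *ᵥ φv i)).re := by
  obtain rfl : φv = fun i => U i *ᵥ φ := funext hφv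
  obtain ⟨⟨i₀, rfl⟩, hlam⟩ := hlam
  have hn : (0 : ℝ) < n := Nat.cast_pos.mpr i₀.pos
  set c := (1 - β) / n
  have hc_pos : 0 < c := div_pos (by linarith) hn
  have hcn : c * n = 1 - β := div_mul_cancel₀ _ hn.ne'
  have hc (i) : c ≤ hΔH.eigenvalues i :=
    ((div_le_iff₀' hn).mpr (by linarith)).trans (hlam ⟨i, rfl⟩)
  have hΔpd : Δ.PosDef :=
    hΔH.posDef_iff_eigenvalues_pos.mpr fun i => hc_pos.trans_le (hc i)
  have hΔsum :
      ∑ i, vecMulVec (U i *ᵥ φ) (star (U i *ᵥ φ)) = (Fintype.card (Fin m) : ℂ) • Δ := by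
    rw [hΔ, smul_smul, Fintype.card_fin, mul_one_div_cancel (Nat.cast_ne_zero.mpr hm.ne'),
      one_smul]
  have hinv (i) : star (U i *ᵥ φ) ⬝ᵥ (Δ⁻¹ *ᵥ (U i *ᵥ φ)) = n := by
    simpa using star_dotProduct_inv_mulVec_orbit hUunit hUinj hUmul hΔsum hΔpd.isUnit i
  have : Nonempty (Fin m) := ⟨⟨0, hm⟩⟩
  have htr : Δ.trace = 1 := trace_eq_one_of_orbit hUunit hφunit hΔsum
  set a : ℂ := γ * √(1 / m)
  have ha : ‖a‖ ^ 2 * m = c := by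
    simp only [a, norm_mul, Complex.norm_real, Real.norm_eq_abs, mul_pow, sq_abs, hγ]
    rw [Real.sq_sqrt hc_pos.le, Real.sq_sqrt (by positivity)]
    field_simp
  have hS (i) :
      S i = vecMulVec (a • (Δ⁻¹ *ᵥ (U i *ᵥ φ))) (star (a • (Δ⁻¹ *ᵥ (U i *ᵥ φ)))) := by
    rw [hS, hμ, hψ, mulVec_smul, smul_smul]
  have hS0 : S0 = 1 - c • Δ⁻¹ := by
    rw [hS0, Finset.sum_congr rfl fun i _ => hS i,
      sum_vecMulVec_smul_inv_mulVec hΔH hΔpd.isUnit hΔsum, Fintype.card_fin, ha]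
  refine ⟨hS0 ▸ hΔpd.posSemidef_one_sub_smul_inv hc, ?_, fun N₀ N _ hN hsum htrN => ?_⟩
  · rw [hS0, trace_mul_one_sub_smul_inv hΔpd.isUnit, htr, Fintype.card_fin, Complex.real_smul,
      ← Complex.ofReal_natCast, ← Complex.ofReal_mul, hcn]
    push_cast
    ring
  · have hbound := sum_re_star_dotProduct_mulVec_le (v := fun i => U i *ᵥ φ) (t := n) hΔpd htr
      (fun i => by rw [hinv i, RCLike.natCast_re]) hN hsum
    simp only [← RCLike.re_to_complex, hS, re_star_dotProduct_vecMulVec_smul_inv_mulVec hΔH,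
      hinv, htrN] at hbound ⊢
    simp only [RCLike.norm_natCast, Finset.sum_const, Finset.card_univ, Fintype.card_fin,
      nsmul_eq_mul]
    refine mul_le_mul_of_nonneg_left (hbound.trans_eq ?_) (by positivity)
    linear_combination (-(n : ℝ) ^ 2) * ha - n * hcn

/-- Optimality of the SIM for pure GU state sets: for a pure geometrically
uniform state set |φ_i⟩ = U_i|φ⟩ with equal priors 1/m and invertible Δ, for
every β with 1 − nλ_min ≤ β < 1, the SIM with γ = √((1−β)/n) is a measurement
with P_I = β maximizing P_D among all measurements with P_I = β. -/
theorem stmt_13 {n m : ℕ} (hm : 0 < m)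
    (U : Fin m → Matrix (Fin n) (Fin n) ℂ)
    (hUunit : ∀ i, U i * (U i)ᴴ = 1)
    (hUinj : Function.Injective U)
    (hU1 : U ⟨0, hm⟩ = 1)
    (hUmul : ∀ i j, ∃ k, U i * U j = U k)
    (hUinv : ∀ i, ∃ j, (U i)ᴴ = U j)
    (φ : Fin n → ℂ) (hφunit : star φ ⬝ᵥ φ = 1)
    (φv : Fin m → (Fin n → ℂ)) (hφv : ∀ i, φv i = U i *ᵥ φ)
    (Δ : Matrix (Fin n) (Fin n) ℂ)
    (hΔ : Δ = (1 / (m : ℂ)) • ∑ i, Matrix.vecMulVec (φv i) (star (φv i)))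
    (hΔinv : IsUnit Δ.det) (hΔH : Δ.IsHermitian)
    (lam : ℝ) (hlam : IsLeast (Set.range hΔH.eigenvalues) lam)
    (β : ℝ) (hβ1 : 1 - (n : ℝ) * lam ≤ β) (hβ2 : β < 1)
    (γ : ℝ) (hγ : γ = Real.sqrt ((1 - β) / n))
    (ψ : Fin m → (Fin n → ℂ))
    (hψ : ∀ i, ψ i = (Real.sqrt (1 / m) : ℂ) • φv i)
    (μ : Fin m → (Fin n → ℂ))
    (hμ : ∀ i, μ i = (γ : ℂ) • (Δ⁻¹ *ᵥ ψ i))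
    (S : Fin m → Matrix (Fin n) (Fin n) ℂ)
    (hS : ∀ i, S i = Matrix.vecMulVec (μ i) (star (μ i)))
    (S0 : Matrix (Fin n) (Fin n) ℂ) (hS0 : S0 = 1 - ∑ i, S i) :
    S0.PosSemidef ∧ (Δ * S0).trace = (β : ℂ) ∧
    ∀ (N0 : Matrix (Fin n) (Fin n) ℂ) (N : Fin m → Matrix (Fin n) (Fin n) ℂ),
      N0.PosSemidef → (∀ i, (N i).PosSemidef) → (N0 + ∑ i, N i = 1) →
      (Δ * N0).trace = (β : ℂ) →
      (1 / m : ℝ) * ∑ i, (star (φv i) ⬝ᵥ (N i *ᵥ φv i)).re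
        ≤ (1 / m : ℝ) * ∑ i, (star (φv i) ⬝ᵥ (S i *ᵥ φv i)).re :=
  stmt_13_general hm U hUunit hUinj hUmul φ hφunit φv hφv Δ hΔ hΔH lam hlam β hβ1 hβ2 γ hγ ψ hψ μ hμ
    S hS S0 hS0
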